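/- Each Hoeffding projection is degenerate: with the notation of the Hoeffding decomposition, for every nonempty I ⊆ {1,…,m} and every ℓ₀ ∈ I, E[h^I(ξ_I) | ξ_j, j ∈ I∖{ℓ₀}] = 0 almost surely, where h^I(ξ_I) = ∑_{J ⊆ I} (−1)^{|I|−|J|} E[h(ξ₁,…,ξ_m) | ξ_j, j ∈ J]. -/

import Mathlib

/-!
Write `𝓜 J` for the σ-algebra generated by `ξ_j, j ∈ J`. For independent coordinates,
conditioning `E[h | 𝓜 J]` further on `𝓜 K` gives `E[h | 𝓜 (J ∩ K)]`: the part `K \ J` of `K` is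
independent of `𝓜 J` and can be dropped, after which the tower property applies. With
`K = I ∖ {ℓ₀}` every term of `h^I` becomes `± E[h | 𝓜 (J ∖ {ℓ₀})]`, and the terms for `J` and
`J ∪ {ℓ₀}` cancel.
-/

open MeasureTheory ProbabilityTheory Finset MeasurableSpace

theorem Finset.sum_powerset_neg_one_pow_smul_erase {α R M : Type*} [DecidableEq α] [Ring R]
    [AddCommGroup M] [Module R M] {I : Finset α} {a : α} (ha : a ∈ I) (F : Finset α → M) :
    ∑ J ∈ I.powerset, ((-1 : R) ^ (#I - #J)) • F (J.erase a) = 0 := by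
  have ha' : a ∉ I.erase a := notMem_erase a I
  rw [← insert_erase ha, sum_powerset_insert ha', ← sum_add_distrib]
  refine sum_eq_zero fun J hJ => ?_
  have hJI : J ⊆ I.erase a := mem_powerset.mp hJ
  have haJ : a ∉ J := fun h => ha' (hJI h)
  rw [erase_insert haJ, erase_eq_of_notMem haJ, card_insert_of_notMem ha',
    card_insert_of_notMem haJ, ← add_smul, Nat.sub_add_comm (card_le_card hJI),
    Nat.add_sub_add_right, pow_succ, mul_neg_one, neg_add_cancel, zero_smul]

section PiSystem

variable {Ω : Type*}

theorem MeasurableSpace.sup_eq_generateFrom_inter (m₁ m₂ : MeasurableSpace Ω) :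
    m₁ ⊔ m₂ = generateFrom (Set.image2 (· ∩ ·) {s | MeasurableSet[m₁] s}
      {s | MeasurableSet[m₂] s}) := by
  refine le_antisymm (sup_le ?_ ?_) (generateFrom_le ?_)
  · exact fun t ht => measurableSet_generateFrom ⟨t, ht, Set.univ, .univ, Set.inter_univ t⟩
  · exact fun u hu => measurableSet_generateFrom ⟨Set.univ, .univ, u, hu, Set.univ_inter u⟩
  · rintro _ ⟨t, ht, u, hu, rfl⟩
    exact (le_sup_left (b := m₂) t ht).inter (le_sup_right (a := m₁) u hu)

theorem IsPiSystem.image2_inter {C D : Set (Set Ω)} (hC : IsPiSystem C) (hD : IsPiSystem D) :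
    IsPiSystem (Set.image2 (· ∩ ·) C D) := by
  rintro _ ⟨t₁, ht₁, u₁, hu₁, rfl⟩ _ ⟨t₂, ht₂, u₂, hu₂, rfl⟩ hne
  rw [Set.inter_inter_inter_comm] at hne ⊢
  exact Set.mem_image2_of_mem (hC _ ht₁ _ ht₂ hne.left) (hD _ hu₁ _ hu₂ hne.right)

end PiSystem

section CondExp

variable {Ω B : Type*} [NormedAddCommGroup B] [NormedSpace ℝ B]
  {m₁ m₂ n : MeasurableSpace Ω} [m₀ : MeasurableSpace Ω] {μ : Measure Ω}

theorem setIntegral_eq_of_isPiSystem {C : Set (Set Ω)} (hle : n ≤ m₀)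
    (hgen : n = generateFrom C) (hC : IsPiSystem C) {f g : Ω → B} (hf : Integrable f μ)
    (hg : Integrable g μ) (h_univ : ∫ x, f x ∂μ = ∫ x, g x ∂μ)
    (h_basic : ∀ s ∈ C, ∫ x in s, f x ∂μ = ∫ x in s, g x ∂μ) {s : Set Ω}
    (hs : MeasurableSet[n] s) : ∫ x in s, f x ∂μ = ∫ x in s, g x ∂μ := by
  induction s, hs using induction_on_inter hgen hC with
  | empty => simp
  | basic t ht => exact h_basic t ht
  | compl t ht iht =>
    rw [← integral_add_compl (hle t ht) hf, ← integral_add_compl (hle t ht) hg, iht] at h_univ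
    exact add_left_cancel h_univ
  | iUnion t hdisj ht iht =>
    have ht₀ i := hle _ (ht i)
    rw [integral_iUnion ht₀ hdisj hf.integrableOn, integral_iUnion ht₀ hdisj hg.integrableOn]
    exact tsum_congr iht

variable [CompleteSpace B]

theorem setIntegral_inter_eq_measureReal_smul_of_indep [IsFiniteMeasure μ] (h₁ : m₁ ≤ m₀)
    (h₂ : m₂ ≤ m₀) (hindep : Indep m₁ m₂ μ) {f : Ω → B} (hf : StronglyMeasurable[m₁] f)
    (hfi : Integrable f μ) {t u : Set Ω} (ht : MeasurableSet[m₁] t) (hu : MeasurableSet[m₂] u) :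
    ∫ x in t ∩ u, f x ∂μ = μ.real u • ∫ x in t, f x ∂μ := by
  have hce : μ[t.indicator f | m₂] =ᵐ[μ] fun _ => μ[t.indicator f] :=
    condExp_indep_eq h₁ h₂ (hf.indicator ht) hindep
  calc ∫ x in t ∩ u, f x ∂μ = ∫ x in u, t.indicator f x ∂μ := by
        rw [setIntegral_indicator (h₁ t ht), Set.inter_comm]
    _ = ∫ x in u, μ[t.indicator f | m₂] x ∂μ :=
        (setIntegral_condExp h₂ (hfi.indicator (h₁ t ht)) hu).symm
    _ = μ.real u • ∫ x in t, f x ∂μ := by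
        rw [setIntegral_congr_ae (h₂ u hu) (hce.mono fun x hx _ => hx), setIntegral_const,
          integral_indicator (h₁ t ht)]

theorem condExp_sup_of_indep [IsFiniteMeasure μ] (hn : n ≤ m₁) (h₁ : m₁ ≤ m₀) (h₂ : m₂ ≤ m₀)
    (hindep : Indep m₁ m₂ μ) {f : Ω → B} (hf : StronglyMeasurable[m₁] f)
    (hfi : Integrable f μ) : μ[f | n ⊔ m₂] =ᵐ[μ] μ[f | n] := by
  have hn₀ : n ≤ m₀ := hn.trans h₁
  have hle : n ⊔ m₂ ≤ m₀ := sup_le hn₀ h₂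
  refine (ae_eq_condExp_of_forall_setIntegral_eq hle hfi
    (fun _ _ _ => integrable_condExp.integrableOn) (fun s hs _ => ?_)
    (stronglyMeasurable_condExp.mono (le_sup_left : n ≤ n ⊔ m₂)).aestronglyMeasurable).symm
  refine setIntegral_eq_of_isPiSystem hle (sup_eq_generateFrom_inter n m₂)
    ((@isPiSystem_measurableSet Ω n).image2_inter (@isPiSystem_measurableSet Ω m₂)) integrable_condExp hfi
    (integral_condExp hn₀) ?_ hs
  -- on `t ∩ u` both integrals factor as `μ.real u • ∫ x in t, _ ∂μ`
  rintro _ ⟨t, ht, u, hu, rfl⟩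
  rw [setIntegral_inter_eq_measureReal_smul_of_indep h₁ h₂ hindep
      (stronglyMeasurable_condExp.mono hn) integrable_condExp (hn t ht) hu,
    setIntegral_inter_eq_measureReal_smul_of_indep h₁ h₂ hindep hf hfi (hn t ht) hu,
    setIntegral_condExp hn₀ hfi ht]

theorem condExp_condExp_of_iIndep {ι : Type*} [DecidableEq ι] [IsProbabilityMeasure μ]
    {𝓜 : ι → MeasurableSpace Ω} (h_le : ∀ i, 𝓜 i ≤ m₀) (hindep : iIndep 𝓜 μ) (f : Ω → B)
    (J K : Finset ι) :
    μ[μ[f | ⨆ j ∈ J, 𝓜 j] | ⨆ j ∈ K, 𝓜 j] =ᵐ[μ] μ[f | ⨆ j ∈ J ∩ K, 𝓜 j] := by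
  have hsup_le (A : Finset ι) : ⨆ j ∈ A, 𝓜 j ≤ m₀ := iSup₂_le fun j _ => h_le j
  have hJK : ⨆ j ∈ J ∩ K, 𝓜 j ≤ ⨆ j ∈ J, 𝓜 j := biSup_mono fun j hj => (mem_inter.mp hj).1
  have hsplit : ⨆ j ∈ K, 𝓜 j = (⨆ j ∈ J ∩ K, 𝓜 j) ⊔ ⨆ j ∈ K \ J, 𝓜 j := by
    rw [← Finset.iSup_union, union_comm, inter_comm, sdiff_union_inter]
  have hindep' : Indep (⨆ j ∈ J, 𝓜 j) (⨆ j ∈ K \ J, 𝓜 j) μ :=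
    indep_iSup_of_disjoint h_le hindep (S := J) (T := ↑(K \ J)) (disjoint_coe.mpr disjoint_sdiff)
  rw [hsplit]
  exact (condExp_sup_of_indep hJK (hsup_le J) (hsup_le _) hindep' stronglyMeasurable_condExp
    integrable_condExp).trans (condExp_condExp_of_le hJK (hsup_le J))

end CondExp

theorem stmt8_general {Ω S B : Type*} [mΩ : MeasurableSpace Ω] [MeasurableSpace S]
    [NormedAddCommGroup B] [NormedSpace ℝ B] [CompleteSpace B]
    {P : Measure Ω} [IsProbabilityMeasure P]
    (m : ℕ) (ξ : ℕ → Ω → S) (hmeas : ∀ i, Measurable (ξ i))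
    (hindep : iIndepFun ξ P)
    (h : (Fin m → S) → B)
    (I : Finset (Fin m)) (ℓ₀ : Fin m) (hℓ₀ : ℓ₀ ∈ I) :
    P[(fun ω => ∑ J ∈ I.powerset,
        ((-1 : ℝ) ^ (I.card - J.card)) •
          (P[(fun ω => h (fun k => ξ k ω))
              | ⨆ j ∈ J, MeasurableSpace.comap (ξ (j : ℕ)) inferInstance]) ω)
      | ⨆ j ∈ I.erase ℓ₀, MeasurableSpace.comap (ξ (j : ℕ)) inferInstance]
    =ᵐ[P] 0 := by
  classical
  set F : Ω → B := fun ω => h (fun k => ξ k ω)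
  set 𝓜 : Fin m → MeasurableSpace Ω := fun j => MeasurableSpace.comap (ξ j) inferInstance
  have h𝓜 : iIndep 𝓜 P := (hindep.precomp Fin.val_injective).iIndep
  have hterm (J : Finset (Fin m)) (hJ : J ∈ I.powerset) :
      P[((-1 : ℝ) ^ (#I - #J)) • P[F | ⨆ j ∈ J, 𝓜 j] | ⨆ j ∈ I.erase ℓ₀, 𝓜 j]
        =ᵐ[P] ((-1 : ℝ) ^ (#I - #J)) • P[F | ⨆ j ∈ J.erase ℓ₀, 𝓜 j] := by
    have hJ' : J ∩ I.erase ℓ₀ = J.erase ℓ₀ := by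
      rw [inter_erase, inter_eq_left.mpr (mem_powerset.mp hJ)]
    refine (condExp_smul _ _ _).trans (Filter.EventuallyEq.const_smul ?_ _)
    rw [← hJ']
    exact condExp_condExp_of_iIndep (𝓜 := 𝓜) (fun j => (hmeas j).comap_le) h𝓜 F J (I.erase ℓ₀)
  calc P[(fun ω => ∑ J ∈ I.powerset, ((-1 : ℝ) ^ (#I - #J)) • P[F | ⨆ j ∈ J, 𝓜 j] ω)
        | ⨆ j ∈ I.erase ℓ₀, 𝓜 j]
      = P[∑ J ∈ I.powerset, ((-1 : ℝ) ^ (#I - #J)) • P[F | ⨆ j ∈ J, 𝓜 j]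
        | ⨆ j ∈ I.erase ℓ₀, 𝓜 j] := by
        congr 1; ext ω; simp only [Finset.sum_apply, Pi.smul_apply]
    _ =ᵐ[P] ∑ J ∈ I.powerset,
        P[((-1 : ℝ) ^ (#I - #J)) • P[F | ⨆ j ∈ J, 𝓜 j] | ⨆ j ∈ I.erase ℓ₀, 𝓜 j] :=
      condExp_finsetSum (fun _ _ => integrable_condExp.smul _) _
    _ =ᵐ[P] ∑ J ∈ I.powerset, ((-1 : ℝ) ^ (#I - #J)) • P[F | ⨆ j ∈ J.erase ℓ₀, 𝓜 j] :=
      eventuallyEq_sum hterm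
    _ = 0 := sum_powerset_neg_one_pow_smul_erase hℓ₀ fun J => P[F | ⨆ j ∈ J, 𝓜 j]

/-- Each Hoeffding projection is degenerate: for nonempty `I ⊆ {0,…,m-1}` and `ℓ₀ ∈ I`,
`E[h^I(ξ_I) | ξ_j, j ∈ I∖{ℓ₀}] = 0` a.s., where
`h^I(ξ_I) = ∑_{J ⊆ I} (-1)^{|I|-|J|} E[h(ξ_0,…,ξ_{m-1}) | ξ_j, j ∈ J]`. -/
theorem stmt8 {Ω S B : Type*} [mΩ : MeasurableSpace Ω] [MeasurableSpace S]
    [NormedAddCommGroup B] [NormedSpace ℝ B] [CompleteSpace B]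
    {P : Measure Ω} [IsProbabilityMeasure P]
    (m : ℕ) (ξ : ℕ → Ω → S) (hmeas : ∀ i, Measurable (ξ i))
    (hindep : iIndepFun ξ P)
    (hid : ∀ i, IdentDistrib (ξ i) (ξ 0) P P)
    (h : (Fin m → S) → B) (hmeas_h : StronglyMeasurable h)
    (hint : Integrable (fun ω => h (fun k => ξ k ω)) P)
    (I : Finset (Fin m)) (hI : I.Nonempty) (ℓ₀ : Fin m) (hℓ₀ : ℓ₀ ∈ I) :
    P[(fun ω => ∑ J ∈ I.powerset,
        ((-1 : ℝ) ^ (I.card - J.card)) •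
          (P[(fun ω => h (fun k => ξ k ω))
              | ⨆ j ∈ J, MeasurableSpace.comap (ξ (j : ℕ)) inferInstance]) ω)
      | ⨆ j ∈ I.erase ℓ₀, MeasurableSpace.comap (ξ (j : ℕ)) inferInstance]
    =ᵐ[P] 0 :=
  stmt8_general (mΩ := mΩ) m ξ hmeas hindep h I ℓ₀ hℓ₀
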